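/- Let π : A → B(H) be a non-degenerate representation of a unital C*-algebra A with WE(π) nonempty. A map φ ∈ WE(π) is an extreme point of WE(π) if and only if every φ₀ ∈ [0, φ] ∩ t·WE(π) with 0 < t < 1 satisfies φ₀ = tφ, where [0, φ] is the order interval in the completely positive maps from B(H) to π(A)''. -/
import Mathlib

noncomputable section

/-- Complete positivity via matrix amplifications. -/
def IsCPMap {A B : Type*} [NonUnitalRing A] [StarRing A] [Module ℂ A]
    [NonUnitalRing B] [StarRing B] [Module ℂ B] (φ : A →ₗ[ℂ] B) : Prop :=
  ∀ (n : ℕ) (a : Matrix (Fin n) (Fin n) A),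
    (∃ b : Matrix (Fin n) (Fin n) A, a = star b * b) →
      ∃ c : Matrix (Fin n) (Fin n) B, a.map φ = star c * c

variable {A : Type*} [CStarAlgebra A]
variable {H : Type*} [NormedAddCommGroup H] [InnerProductSpace ℂ H] [CompleteSpace H]

/-- The set of weak expectations of a representation `π`. -/
def WeakExp (π : A →⋆ₐ[ℂ] (H →L[ℂ] H)) :
    Set ((H →L[ℂ] H) →ₗ[ℂ] (H →L[ℂ] H)) :=
  {θ | IsCPMap θ ∧ θ 1 = 1 ∧
    (∀ S, θ S ∈ Set.centralizer (Set.centralizer (Set.range (⇑π)))) ∧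
    ∀ a, θ (π a) = π a}

/-- Non-degeneracy of a representation. -/
def Nondeg (π : A →⋆ₐ[ℂ] (H →L[ℂ] H)) : Prop :=
  (Submodule.span ℂ {x : H | ∃ a, ∃ h : H, π a h = x}).topologicalClosure = ⊤

lemma isCPMap_smul {A B : Type*} [NonUnitalRing A] [StarRing A] [Module ℂ A]
    [NonUnitalRing B] [StarRing B] [Module ℂ B] [StarModule ℂ B]
    [SMulCommClass ℂ B B] [IsScalarTower ℂ B B]
    (r : ℝ) (hr : 0 ≤ r) (φ : A →ₗ[ℂ] B) (h : IsCPMap φ) :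
    IsCPMap ((r : ℂ) • φ) := by
  intro n a ha
  obtain ⟨c, hc⟩ := h n a ha
  refine ⟨((Real.sqrt r : ℂ)) • c, ?_⟩
  have h1 : a.map ((r:ℂ) • φ) = (r:ℂ) • a.map φ := by
    ext i j; simp [Matrix.map_apply]
  rw [h1, hc, star_smul, Matrix.smul_mul, Matrix.mul_smul, smul_smul]
  congr 1
  rw [RCLike.star_def, Complex.conj_ofReal, ← Complex.ofReal_mul,
    Real.mul_self_sqrt hr]

lemma sub_mem_cent {M : Type*} [NonUnitalNonAssocRing M] {S : Set M} {x y : M}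
    (hx : x ∈ Set.centralizer S) (hy : y ∈ Set.centralizer S) :
    x - y ∈ Set.centralizer S := by
  intro m hm
  rw [mul_sub, sub_mul, hx m hm, hy m hm]

lemma smul_mem_cent {M : Type*} [NonUnitalNonAssocRing M] [Module ℂ M]
    [SMulCommClass ℂ M M] [IsScalarTower ℂ M M] {S : Set M} {x : M} (z : ℂ)
    (hx : x ∈ Set.centralizer S) : z • x ∈ Set.centralizer S := by
  intro m hm
  rw [mul_smul_comm, smul_mul_assoc, hx m hm]

/-- `φ ∈ WE(π)` is an extreme point of `WE(π)` iff every
`φ₀ ∈ [0, φ] ∩ t·WE(π)` with `0 < t < 1` equals `tφ`. -/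
theorem extreme_iff_order_interval
    (π : A →⋆ₐ[ℂ] (H →L[ℂ] H)) (hπ : Nondeg π) (hne : (WeakExp π).Nonempty)
    (φ : (H →L[ℂ] H) →ₗ[ℂ] (H →L[ℂ] H)) (hφ : φ ∈ WeakExp π) :
    (∀ φ₁ ∈ WeakExp π, ∀ φ₂ ∈ WeakExp π, ∀ l : ℝ, 0 < l → l < 1 →
        φ = (l : ℂ) • φ₁ + ((1 - l : ℝ) : ℂ) • φ₂ → φ₁ = φ ∧ φ₂ = φ) ↔
    (∀ t : ℝ, 0 < t → t < 1 → ∀ φ₀ : (H →L[ℂ] H) →ₗ[ℂ] (H →L[ℂ] H),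
        IsCPMap φ₀ → IsCPMap (φ - φ₀) → (∃ θ ∈ WeakExp π, φ₀ = (t : ℂ) • θ) →
        φ₀ = (t : ℂ) • φ) := by
  obtain ⟨hφcp, hφ1, hφc, hφπ⟩ := hφ
  constructor
  · intro hext t ht0 ht1 φ₀ hcp₀ hcpd ⟨θ, hθ, hφ₀⟩
    obtain ⟨hθcp, hθ1, hθc, hθπ⟩ := hθ
    set c : ℂ := ((1 - t : ℝ) : ℂ) with hc
    have hc0 : c ≠ 0 := by
      simp only [hc, ne_eq, Complex.ofReal_eq_zero]
      linarith
    set ψ : (H →L[ℂ] H) →ₗ[ℂ] (H →L[ℂ] H) := c⁻¹ • (φ - φ₀) with hψdef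
    have hcinv : c⁻¹ = (((1 - t)⁻¹ : ℝ) : ℂ) := by
      rw [hc, Complex.ofReal_inv]
    have hψmem : ψ ∈ WeakExp π := by
      refine ⟨?_, ?_, ?_, ?_⟩
      · rw [hψdef, hcinv]
        exact isCPMap_smul _ (inv_nonneg.mpr (by linarith)) _ hcpd
      · have : (φ - φ₀) 1 = c • 1 := by
          simp only [LinearMap.sub_apply, hφ1, hφ₀, LinearMap.smul_apply, hθ1, hc]
          push_cast
          rw [sub_smul, one_smul]
        simp only [hψdef, LinearMap.smul_apply, this, smul_smul,
          inv_mul_cancel₀ hc0, one_smul]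
      · intro S
        simp only [hψdef, LinearMap.smul_apply, LinearMap.sub_apply]
        refine smul_mem_cent _ (sub_mem_cent (hφc S) ?_)
        rw [hφ₀]
        exact smul_mem_cent _ (hθc S)
      · intro a
        have : (φ - φ₀) (π a) = c • π a := by
          simp only [LinearMap.sub_apply, hφπ, hφ₀, LinearMap.smul_apply, hθπ, hc]
          push_cast
          rw [sub_smul, one_smul]
        simp only [hψdef, LinearMap.smul_apply, this, smul_smul,
          inv_mul_cancel₀ hc0, one_smul]
    have hdecomp : φ = (t : ℂ) • θ + ((1 - t : ℝ) : ℂ) • ψ := by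
      rw [hψdef, smul_smul, mul_inv_cancel₀ hc0, one_smul, ← hφ₀]
      abel
    obtain ⟨hθφ, -⟩ := hext θ ⟨hθcp, hθ1, hθc, hθπ⟩ ψ hψmem t ht0 ht1 hdecomp
    rw [hφ₀, hθφ]
  · intro h φ₁ hφ₁ φ₂ hφ₂ l hl0 hl1 heq
    have hl0' : (l : ℂ) ≠ 0 := by
      simp only [ne_eq, Complex.ofReal_eq_zero]; linarith
    have hl1' : ((1 - l : ℝ) : ℂ) ≠ 0 := by
      simp only [ne_eq, Complex.ofReal_eq_zero]; linarith
    have hcp₀ : IsCPMap ((l : ℂ) • φ₁) := isCPMap_smul l hl0.le _ hφ₁.1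
    have hsub : φ - (l : ℂ) • φ₁ = ((1 - l : ℝ) : ℂ) • φ₂ := by
      rw [heq]; abel
    have hcpd : IsCPMap (φ - (l : ℂ) • φ₁) := by
      rw [hsub]
      exact isCPMap_smul (1 - l) (by linarith) _ hφ₂.1
    have h1 : (l : ℂ) • φ₁ = (l : ℂ) • φ :=
      h l hl0 hl1 _ hcp₀ hcpd ⟨φ₁, hφ₁, rfl⟩
    have hφ₁φ : φ₁ = φ := smul_right_injective _ hl0' h1
    refine ⟨hφ₁φ, ?_⟩
    have h2 : ((1 - l : ℝ) : ℂ) • φ₂ = ((1 - l : ℝ) : ℂ) • φ := by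
      rw [← hsub, hφ₁φ, ← h1, hφ₁φ]
      rw [heq, hφ₁φ]
      push_cast
      module
    exact smul_right_injective _ hl1' h2
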